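/- Let (S_n) be a real random walk with negative drift E[S_1] < 0 such that E[e^{γ S_1}] = 1 for some γ > 0 and E[e^{u S_1}] < ∞ for all u ∈ (−η₁, γ + η₂), for some η₁, η₂ > 0. Then for every r > γ and every α ≥ 0 there is a constant c'(r, α) > 0 such that for all a ≥ 0 and L > 1: E_a[ ∑_{0 ≤ ℓ < τ_L^+} (1 + L − S_ℓ)^α e^{r S_ℓ} ] ≤ c'(r, α) · e^{γ(a − L)} · e^{r L}. -/

import Mathlib

open MeasureTheory ProbabilityTheory Filter Topology Real
open scoped ENNReal NNReal

variable {Ω : Type*} [MeasurableSpace Ω]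

/-- The random walk started at `x` with increments `X`. -/
noncomputable def walk (X : ℕ → Ω → ℝ) (x : ℝ) (n : ℕ) (ω : Ω) : ℝ :=
  x + ∑ i ∈ Finset.range n, X i ω

/-- `τ_a^+`: the first time the walk (started at `x`) exceeds level `a`, as an
extended natural number (`⊤` if the walk never exceeds `a`). -/
noncomputable def hitAbove (X : ℕ → Ω → ℝ) (x a : ℝ) (ω : Ω) : ℕ∞ :=
  ⨅ (n : ℕ) (_ : a < walk X x n ω), (n : ℕ∞)

/-- `τ_a^-`: the first time the walk (started at `x`) goes below level `a`. -/
noncomputable def hitBelow (X : ℕ → Ω → ℝ) (x a : ℝ) (ω : Ω) : ℕ∞ :=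
  ⨅ (n : ℕ) (_ : walk X x n ω < a), (n : ℕ∞)

/-- `S_{τ_a^+}`: the walk stopped when it first exceeds `a` (junk value if never). -/
noncomputable def stopAbove (X : ℕ → Ω → ℝ) (x a : ℝ) (ω : Ω) : ℝ :=
  walk X x (hitAbove X x a ω).toNat ω

/-- `S_{τ_a^-}`: the walk stopped when it first goes below `a` (junk value if never). -/
noncomputable def stopBelow (X : ℕ → Ω → ℝ) (x a : ℝ) (ω : Ω) : ℝ :=
  walk X x (hitBelow X x a ω).toNat ω

/-- A real random variable has non-arithmetic distribution: its law is not
supported on any lattice `hℤ`. -/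
def NonArithmetic (Y : Ω → ℝ) (μ : Measure Ω) : Prop :=
  ¬ ∃ h : ℝ, ∀ᵐ ω ∂μ, ∃ k : ℤ, Y ω = k * h



/-!
A Lyapunov-function argument. Pick `γ < ρ < u < γ + η₂` with `ρ < r` and, in the variable
`y = x - L`, put `V(y) = e^{(ρ-γ)s + γy} + e^{(ρ-u)s + uy} - e^{ρy}`. It is nonnegative: compare
`e^{ρy}` with the first term for `y ≤ s` and with the second for `y ≥ s`. Since `E e^{γX} = 1`
while `E e^{ρX} > 1` (strict convexity and the negative drift), for `s` large and `y ≤ 0`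
we get `E V(y + X) + c e^{ρy} ≤ V(y)`; the `u`-term keeps `V` nonnegative at the overshoot
`S_{τ_L^+} > L`. Summing this drift inequality along the walk killed at `τ_L^+` bounds
`E_a ∑_{ℓ < τ_L^+} e^{ρ(S_ℓ - L)}` by `V(a - L) / c ≲ e^{γ(a - L)}`, and
`(1 + L - x)^α e^{rx} ≲ e^{rL} e^{ρ(x - L)}` for `x ≤ L`.
-/

theorem ProbabilityTheory.IndepFun.lintegral_comp_eq_lintegral_lintegral
    {β γ : Type*} [MeasurableSpace β] [MeasurableSpace γ]
    {μ : Measure Ω} [IsFiniteMeasure μ] {Y : Ω → β} {Z : Ω → γ}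
    (hYZ : IndepFun Y Z μ) (hY : Measurable Y) (hZ : Measurable Z)
    {H : β × γ → ℝ≥0∞} (hH : Measurable H) :
    ∫⁻ ω, H (Y ω, Z ω) ∂μ = ∫⁻ ω, ∫⁻ ω', H (Y ω, Z ω') ∂μ ∂μ := by
  calc ∫⁻ ω, H (Y ω, Z ω) ∂μ = ∫⁻ p, H p ∂(μ.map fun ω => (Y ω, Z ω)) :=
        (lintegral_map hH (hY.prodMk hZ)).symm
    _ = ∫⁻ y, ∫⁻ z, H (y, z) ∂(μ.map Z) ∂(μ.map Y) := by
        rw [hYZ.map_prod_eq_prod_map_map hY.aemeasurable hZ.aemeasurable,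
          lintegral_prod _ hH.aemeasurable]
    _ = ∫⁻ ω, ∫⁻ ω', H (Y ω, Z ω') ∂μ ∂μ := by
        rw [lintegral_map hH.lintegral_prod_right' hY]
        refine lintegral_congr fun ω => ?_
        exact lintegral_map (hH.comp measurable_prodMk_left) hZ

abbrev incrementsBefore (X : ℕ → Ω → ℝ) (l : ℕ) : MeasurableSpace Ω :=
  ⨆ i ∈ Set.Iio l, MeasurableSpace.comap (X i) inferInstance

section Walk

variable {Ω : Type*} {X : ℕ → Ω → ℝ} {x L : ℝ}

lemma walk_zero (X : ℕ → Ω → ℝ) (x : ℝ) (ω : Ω) : walk X x 0 ω = x := by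
  simp [walk]

lemma walk_succ (X : ℕ → Ω → ℝ) (x : ℝ) (n : ℕ) (ω : Ω) :
    walk X x (n + 1) ω = walk X x n ω + X n ω := by
  simp only [walk, Finset.sum_range_succ, add_assoc]

lemma lt_hitAbove_iff {l : ℕ} {ω : Ω} :
    (l : ℕ∞) < hitAbove X x L ω ↔ ∀ k ≤ l, walk X x k ω ≤ L := by
  rw [← ENat.add_one_le_iff (ENat.natCast_ne_top l), hitAbove, le_iInf₂_iff]
  constructor
  · intro h k hkl
    by_contra! hk
    have := h k hk
    norm_cast at this
    omega
  · intro h n hn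
    have : l < n := by
      by_contra! hnl
      exact (h n hnl).not_gt hn
    exact_mod_cast this

lemma not_lt_hitAbove_of_lt (h : L < x) (l : ℕ) (ω : Ω) : ¬(l : ℕ∞) < hitAbove X x L ω :=
  fun hl => (lt_hitAbove_iff.1 hl 0 l.zero_le).not_gt (by rwa [walk_zero])

lemma measurable_walk_incrementsBefore {k l : ℕ} (hkl : k ≤ l) :
    Measurable[incrementsBefore X l] (walk X x k) :=
  measurable_const.add <| Finset.measurable_sum _ fun i hi => Measurable.of_comap_le <|
    le_iSup₂ (f := fun i (_ : i ∈ Set.Iio l) => MeasurableSpace.comap (X i) inferInstance) i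
      ((Finset.mem_range.1 hi).trans_le hkl)

lemma measurableSet_lt_hitAbove (l : ℕ) :
    MeasurableSet[incrementsBefore X l] {ω | (l : ℕ∞) < hitAbove X x L ω} := by
  simp_rw [lt_hitAbove_iff, Set.ofPred_forall]
  exact MeasurableSet.iInter fun k => MeasurableSet.iInter fun hk =>
    measurableSet_le (measurable_walk_incrementsBefore hk) measurable_const

end Walk

section Independence

variable {X : ℕ → Ω → ℝ} {x : ℝ} {μ : Measure Ω}

lemma incrementsBefore_le (hmeas : ∀ i, Measurable (X i)) (l : ℕ) :
    incrementsBefore X l ≤ ‹MeasurableSpace Ω› :=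
  iSup₂_le fun i _ => (hmeas i).comap_le

lemma indep_incrementsBefore (hmeas : ∀ i, Measurable (X i)) (hindep : iIndepFun X μ) (l : ℕ) :
    Indep (incrementsBefore X l) (MeasurableSpace.comap (X l) inferInstance) μ := by
  have h := indep_iSup_of_disjoint (fun i => (hmeas i).comap_le) hindep.iIndep
    (S := Set.Iio l) (T := {l}) (by simp)
  rwa [iSup_singleton] at h

lemma setLIntegral_comp_walk_succ [IsProbabilityMeasure μ] (hmeas : ∀ i, Measurable (X i))
    (hindep : iIndepFun X μ) (hident : ∀ i, IdentDistrib (X i) (X 0) μ μ) {F : ℝ → ℝ≥0∞}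
    (hF : Measurable F) {l : ℕ} {B : Set Ω} (hB : MeasurableSet[incrementsBefore X l] B) :
    ∫⁻ ω in B, F (walk X x (l + 1) ω) ∂μ
      = ∫⁻ ω in B, ∫⁻ ω', F (walk X x l ω + X 0 ω') ∂μ ∂μ := by
  -- the past enters only through `(𝟙_B, S_l)`, which is independent of the next increment
  set Y : Ω → ℝ≥0∞ × ℝ := fun ω => (B.indicator (fun _ => 1) ω, walk X x l ω)
  have hY : Measurable[incrementsBefore X l] Y :=
    (measurable_const.indicator hB).prodMk (measurable_walk_incrementsBefore le_rfl)
  have hYX : IndepFun Y (X l) μ := (IndepFun_iff_Indep _ _ _).2 <|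
    indep_of_indep_of_le_left (indep_incrementsBefore hmeas hindep l) hY.comap_le
  have hH : Measurable fun p : (ℝ≥0∞ × ℝ) × ℝ => p.1.1 * F (p.1.2 + p.2) :=
    measurable_fst.fst.mul (hF.comp (measurable_fst.snd.add measurable_snd))
  have hident' (s : ℝ) : ∫⁻ ω', F (s + X l ω') ∂μ = ∫⁻ ω', F (s + X 0 ω') ∂μ :=
    ((hident l).comp (hF.comp (measurable_const_add s))).lintegral_eq
  have hind (f : Ω → ℝ≥0∞) : ∫⁻ ω in B, f ω ∂μ = ∫⁻ ω, B.indicator (fun _ => 1) ω * f ω ∂μ := by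
    rw [← lintegral_indicator (incrementsBefore_le hmeas l _ hB)]
    congr with ω
    by_cases hω : ω ∈ B <;> simp [hω]
  simp_rw [hind, walk_succ]
  rw [hYX.lintegral_comp_eq_lintegral_lintegral (hY.mono (incrementsBefore_le hmeas l) le_rfl)
    (hmeas l) hH]
  refine lintegral_congr fun ω => ?_
  rw [lintegral_const_mul' _ _ (by by_cases hω : ω ∈ B <;> simp [hω]), hident']

end Independence

theorem lintegral_tsum_lt_hitAbove_le {μ : Measure Ω} [IsProbabilityMeasure μ]
    {X : ℕ → Ω → ℝ} (hmeas : ∀ i, Measurable (X i)) (hindep : iIndepFun X μ)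
    (hident : ∀ i, IdentDistrib (X i) (X 0) μ μ) {F G : ℝ → ℝ≥0∞}
    (hF : Measurable F) (hG : Measurable G) {L : ℝ}
    (hdrift : ∀ x ≤ L, G x + ∫⁻ ω, F (x + X 0 ω) ∂μ ≤ F x) (a : ℝ) :
    ∫⁻ ω, ∑' l : ℕ, (if (l : ℕ∞) < hitAbove X a L ω then G (walk X a l ω) else 0) ∂μ
      ≤ F a := by
  set E : ℕ → Set Ω := fun l => {ω | (l : ℕ∞) < hitAbove X a L ω}
  have hE (l : ℕ) : MeasurableSet (E l) :=
    incrementsBefore_le hmeas l _ (measurableSet_lt_hitAbove l)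
  have hS (l : ℕ) : Measurable (walk X a l) :=
    (measurable_walk_incrementsBefore le_rfl).mono (incrementsBefore_le hmeas l) le_rfl
  have hGS (l : ℕ) : Measurable fun ω => G (walk X a l ω) := hG.comp (hS l)
  have hstep (l : ℕ) : ∫⁻ ω in E l, G (walk X a l ω) ∂μ
      + ∫⁻ ω in E (l + 1), F (walk X a (l + 1) ω) ∂μ ≤ ∫⁻ ω in E l, F (walk X a l ω) ∂μ := by
    have hsub : E (l + 1) ⊆ E l := fun ω hω =>
      lt_hitAbove_iff.2 fun k hk => lt_hitAbove_iff.1 hω k (hk.trans l.le_succ)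
    calc _ ≤ ∫⁻ ω in E l, G (walk X a l ω) ∂μ + ∫⁻ ω in E l, F (walk X a (l + 1) ω) ∂μ := by
          gcongr
      _ = ∫⁻ ω in E l, (G (walk X a l ω) + ∫⁻ ω', F (walk X a l ω + X 0 ω') ∂μ) ∂μ := by
          rw [setLIntegral_comp_walk_succ hmeas hindep hident hF (measurableSet_lt_hitAbove l),
            ← lintegral_add_left (hGS l)]
      _ ≤ ∫⁻ ω in E l, F (walk X a l ω) ∂μ :=
          setLIntegral_mono (hF.comp (hS l)) fun ω hω => hdrift _ (lt_hitAbove_iff.1 hω l le_rfl)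
  have htelescope (N : ℕ) : ∑ l ∈ Finset.range N, ∫⁻ ω in E l, G (walk X a l ω) ∂μ
      + ∫⁻ ω in E N, F (walk X a N ω) ∂μ ≤ F a := by
    induction N with
    | zero =>
      simpa [walk_zero, setLIntegral_const] using mul_le_of_le_one_right' (prob_le_one (s := E 0))
    | succ N ih =>
      rw [Finset.sum_range_succ, add_assoc]
      exact (add_le_add le_rfl (hstep N)).trans ih
  calc _ = ∫⁻ ω, ∑' l : ℕ, (E l).indicator (fun ω => G (walk X a l ω)) ω ∂μ := by
        simp only [Set.indicator_apply, Set.mem_ofPred_eq, E]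
    _ = ∑' l : ℕ, ∫⁻ ω in E l, G (walk X a l ω) ∂μ := by
        rw [lintegral_tsum fun l => ((hGS l).indicator (hE l)).aemeasurable]
        simp_rw [lintegral_indicator (hE _)]
    _ ≤ F a := ENNReal.tsum_le_of_sum_range_le fun N => le_self_add.trans (htelescope N)

lemma one_lt_mgf_of_mgf_eq_one {μ : Measure Ω} [IsProbabilityMeasure μ] {Y : Ω → ℝ}
    (hY : ¬Y =ᵐ[μ] 0) {γ ρ : ℝ} (hγ : 0 < γ) (hγρ : γ < ρ) (hγ1 : mgf Y μ γ = 1)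
    (hintγ : Integrable (fun ω => exp (γ * Y ω)) μ)
    (hintρ : Integrable (fun ω => exp (ρ * Y ω)) μ) :
    1 < mgf Y μ ρ := by
  have hρ : 0 < ρ := hγ.trans hγρ
  set s := γ / ρ
  have hs0 : 0 < s := div_pos hγ hρ
  have hs1 : s < 1 := (div_lt_one hρ).2 hγρ
  -- `γ = (1 - s) • 0 + s • ρ`, and `exp` is strictly convex
  have hsρ (y : ℝ) : s * (ρ * y) = γ * y := by
    simp only [s]; field_simp
  have hconv (y : ℝ) : exp (γ * y) ≤ (1 - s) + s * exp (ρ * y) := by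
    simpa [hsρ] using convexOn_exp.2 (Set.mem_univ 0) (Set.mem_univ (ρ * y))
      (sub_pos.2 hs1).le hs0.le (by ring)
  have hconv_strict {y : ℝ} (hy : y ≠ 0) : exp (γ * y) < (1 - s) + s * exp (ρ * y) := by
    simpa [hsρ] using strictConvexOn_exp.2 (Set.mem_univ 0) (Set.mem_univ (ρ * y))
      (by positivity) (sub_pos.2 hs1) hs0 (by ring)
  set g : Ω → ℝ := fun ω => (1 - s) + s * exp (ρ * Y ω) - exp (γ * Y ω)
  have hA : Integrable (fun ω => (1 - s) + s * exp (ρ * Y ω)) μ :=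
    (integrable_const _).add (hintρ.const_mul s)
  have hg : Integrable g μ := hA.sub hintγ
  have hg_pos : 0 < ∫ ω, g ω ∂μ := by
    rw [integral_pos_iff_support_of_nonneg_ae (ae_of_all _ fun ω => sub_nonneg.2 (hconv _)) hg]
    refine pos_iff_ne_zero.2 fun h0 => hY (ae_iff.2 (measure_mono_null (fun ω hω => ?_) h0))
    exact (sub_pos.2 (hconv_strict hω)).ne'
  have hg_eq : ∫ ω, g ω ∂μ = s * (mgf Y μ ρ - 1) := by
    rw [integral_sub hA hintγ, integral_add (integrable_const _) (hintρ.const_mul s),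
      integral_const_mul]
    simp only [integral_const, probReal_univ, smul_eq_mul, one_mul]
    rw [← mgf, ← mgf, hγ1]
    ring
  nlinarith

lemma exists_rpow_mul_exp_le {α ρ r : ℝ} (hα : 0 ≤ α) (hρr : ρ < r) :
    ∃ K > 0, ∀ x L : ℝ, x ≤ L →
      (1 + L - x) ^ α * exp (r * x) ≤ K * exp (r * L) * exp (ρ * (x - L)) := by
  set c := (r - ρ) / (α + 1)
  have hc : 0 < c := div_pos (sub_pos.2 hρr) (by linarith)
  have hαc : α * c ≤ r - ρ := by
    rw [mul_div_assoc', div_le_iff₀ (by linarith)]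
    nlinarith
  refine ⟨(exp c / c) ^ α, by positivity, fun x L hxL => ?_⟩
  have hlin : 1 + L - x ≤ exp c / c * exp (c * (L - x)) := by
    rw [div_mul_eq_mul_div, ← exp_add, le_div_iff₀ hc]
    nlinarith [add_one_le_exp (c + c * (L - x))]
  calc (1 + L - x) ^ α * exp (r * x)
      ≤ (exp c / c * exp (c * (L - x))) ^ α * exp (r * x) := by
        gcongr
        linarith
    _ = (exp c / c) ^ α * exp (α * c * (L - x) + r * x) := by
        rw [mul_rpow (by positivity) (exp_pos _).le, ← exp_mul, exp_add]
        ring_nf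
    _ ≤ (exp c / c) ^ α * exp ((r - ρ) * (L - x) + r * x) := by
        gcongr
    _ = (exp c / c) ^ α * exp (r * L) * exp (ρ * (x - L)) := by
        rw [mul_assoc, ← exp_add]
        ring_nf

lemma exp_mul_le_exp_add_exp {γ ρ u : ℝ} (hγρ : γ ≤ ρ) (hρu : ρ ≤ u) (t x : ℝ) :
    exp (ρ * x) ≤ exp ((ρ - γ) * t + γ * x) + exp ((ρ - u) * t + u * x) := by
  rcases le_total x t with hxt | htx
  · have := exp_le_exp.2 (show ρ * x ≤ (ρ - γ) * t + γ * x by nlinarith)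
    linarith [exp_pos ((ρ - u) * t + u * x)]
  · have := exp_le_exp.2 (show ρ * x ≤ (ρ - u) * t + u * x by nlinarith)
    linarith [exp_pos ((ρ - γ) * t + γ * x)]

lemma exists_mul_exp_mul_lt {k : ℝ} (hk : k < 0) (a : ℝ) {b : ℝ} (hb : 0 < b) :
    ∃ s, a * exp (k * s) < b := by
  have h := (tendsto_exp_atBot.comp (tendsto_id.const_mul_atTop_of_neg hk)).const_mul a
  rw [mul_zero] at h
  exact (h.eventually (gt_mem_nhds hb)).exists

noncomputable def lyapunov (γ ρ u s y : ℝ) : ℝ :=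
  exp ((ρ - γ) * s + γ * y) + exp ((ρ - u) * s + u * y) - exp (ρ * y)

section Lyapunov

variable {γ ρ u s : ℝ}

lemma lyapunov_nonneg (hγρ : γ ≤ ρ) (hρu : ρ ≤ u) (y : ℝ) : 0 ≤ lyapunov γ ρ u s y :=
  sub_nonneg.2 (exp_mul_le_exp_add_exp hγρ hρu s y)

lemma lyapunov_le (hγu : γ ≤ u) {y : ℝ} (hy : y ≤ 0) :
    lyapunov γ ρ u s y ≤ (exp ((ρ - γ) * s) + exp ((ρ - u) * s)) * exp (γ * y) := by
  have hu : exp ((ρ - u) * s + u * y) ≤ exp ((ρ - u) * s) * exp (γ * y) := by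
    rw [← exp_add]; exact exp_le_exp.2 (by nlinarith)
  have := exp_pos (ρ * y)
  simp only [lyapunov, exp_add] at hu ⊢
  nlinarith

variable {μ : Measure Ω} {Y : Ω → ℝ}

lemma exp_add_mul_add (c θ x y : ℝ) : exp (c + θ * (x + y)) = exp (c + θ * x) * exp (θ * y) := by
  rw [← exp_add]; ring_nf

lemma exp_mul_add (θ x y : ℝ) : exp (θ * (x + y)) = exp (θ * x) * exp (θ * y) := by
  rw [mul_add, exp_add]

lemma integrable_lyapunov_add (hγ : Integrable (fun ω => exp (γ * Y ω)) μ)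
    (hρ : Integrable (fun ω => exp (ρ * Y ω)) μ) (hu : Integrable (fun ω => exp (u * Y ω)) μ)
    (y : ℝ) : Integrable (fun ω => lyapunov γ ρ u s (y + Y ω)) μ := by
  simp only [lyapunov, exp_add_mul_add, exp_mul_add]
  exact ((hγ.const_mul _).add (hu.const_mul _)).sub (hρ.const_mul _)

lemma integral_lyapunov_add (hγ : Integrable (fun ω => exp (γ * Y ω)) μ)
    (hρ : Integrable (fun ω => exp (ρ * Y ω)) μ) (hu : Integrable (fun ω => exp (u * Y ω)) μ)
    (y : ℝ) : ∫ ω, lyapunov γ ρ u s (y + Y ω) ∂μ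
      = mgf Y μ γ * exp ((ρ - γ) * s + γ * y) + mgf Y μ u * exp ((ρ - u) * s + u * y)
        - mgf Y μ ρ * exp (ρ * y) := by
  simp only [lyapunov, exp_add_mul_add, exp_mul_add]
  rw [integral_sub ?_ (hρ.const_mul _), integral_add (hγ.const_mul _) (hu.const_mul _),
    integral_const_mul, integral_const_mul, integral_const_mul]
  · simp only [mgf]
    ring
  · exact (hγ.const_mul _).add (hu.const_mul _)

lemma lyapunov_drift (hγ : Integrable (fun ω => exp (γ * Y ω)) μ)
    (hρ : Integrable (fun ω => exp (ρ * Y ω)) μ) (hu : Integrable (fun ω => exp (u * Y ω)) μ)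
    (hγ1 : mgf Y μ γ = 1) (hρu : ρ ≤ u)
    (hs : 2 * mgf Y μ u * exp ((ρ - u) * s) ≤ mgf Y μ ρ - 1) {y : ℝ} (hy : y ≤ 0) :
    (mgf Y μ ρ - 1) / 2 * exp (ρ * y) + ∫ ω, lyapunov γ ρ u s (y + Y ω) ∂μ
      ≤ lyapunov γ ρ u s y := by
  have hsplit : exp ((ρ - u) * s + u * y) = exp (ρ * y) * exp ((ρ - u) * (s - y)) := by
    rw [← exp_add]; ring_nf
  have hdecay : 2 * mgf Y μ u * exp ((ρ - u) * (s - y)) ≤ mgf Y μ ρ - 1 := by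
    refine le_trans ?_ hs
    have := mgf_nonneg (X := Y) (μ := μ) (t := u)
    gcongr 2 * _ * exp ?_
    nlinarith
  have hP := exp_pos (ρ * y)
  have hQ := exp_pos ((ρ - u) * (s - y))
  rw [integral_lyapunov_add hγ hρ hu, hγ1]
  simp only [lyapunov, hsplit]
  nlinarith [mul_le_mul_of_nonneg_left hdecay hP.le]

lemma ofReal_add_lintegral_lyapunov_le (hγρ : γ ≤ ρ) (hρu : ρ ≤ u)
    (hγ : Integrable (fun ω => exp (γ * Y ω)) μ)
    (hρ : Integrable (fun ω => exp (ρ * Y ω)) μ) (hu : Integrable (fun ω => exp (u * Y ω)) μ)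
    (hγ1 : mgf Y μ γ = 1) (hs : 2 * mgf Y μ u * exp ((ρ - u) * s) < mgf Y μ ρ - 1)
    {c x L : ℝ} (hc : 0 ≤ c) (hx : x ≤ L) :
    ENNReal.ofReal (c * exp (ρ * (x - L)))
        + ∫⁻ ω, ENNReal.ofReal (c * (2 / (mgf Y μ ρ - 1) * lyapunov γ ρ u s (x + Y ω - L))) ∂μ
      ≤ ENNReal.ofReal (c * (2 / (mgf Y μ ρ - 1) * lyapunov γ ρ u s (x - L))) := by
  have hM : 0 < mgf Y μ ρ - 1 :=
    lt_of_le_of_lt (by have := mgf_nonneg (X := Y) (μ := μ) (t := u); positivity) hs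
  have hV (ω : Ω) : 0 ≤ c * (2 / (mgf Y μ ρ - 1) * lyapunov γ ρ u s (x - L + Y ω)) := by
    have := lyapunov_nonneg (s := s) hγρ hρu (x - L + Y ω)
    positivity
  have hdrift := lyapunov_drift hγ hρ hu hγ1 hρu hs.le (sub_nonpos.2 hx)
  simp_rw [add_sub_right_comm x]
  rw [← ofReal_integral_eq_lintegral_ofReal
      (((integrable_lyapunov_add hγ hρ hu _).const_mul _).const_mul c) (ae_of_all _ hV),
    ← ENNReal.ofReal_add (by positivity) (integral_nonneg hV), integral_const_mul,
    integral_const_mul, ← mul_add]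
  refine ENNReal.ofReal_le_ofReal (mul_le_mul_of_nonneg_left ?_ hc)
  calc exp (ρ * (x - L)) + 2 / (mgf Y μ ρ - 1) * ∫ ω, lyapunov γ ρ u s (x - L + Y ω) ∂μ
      = 2 / (mgf Y μ ρ - 1) * ((mgf Y μ ρ - 1) / 2 * exp (ρ * (x - L))
          + ∫ ω, lyapunov γ ρ u s (x - L + Y ω) ∂μ) := by
        field_simp
    _ ≤ 2 / (mgf Y μ ρ - 1) * lyapunov γ ρ u s (x - L) := by gcongr

end Lyapunov

/-- Lemma `lem:estsub`, (est3sub). For a random walk with negative drift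
such that `E[e^{γ S_1}] = 1` and exponential moments on `(-η₁, γ + η₂)`: for every `r > γ`
and `α ≥ 0` there is `c'(r, α) > 0` such that for all `a ≥ 0` and `L > 1`,
`E_a[∑_{0 ≤ ℓ < τ_L^+} (1 + L - S_ℓ)^α e^{r S_ℓ}] ≤ c'(r, α) e^{γ(a - L)} e^{r L}`. -/
theorem negative_drift_weighted_sum_bound
    (μ : Measure Ω) [IsProbabilityMeasure μ]
    (X : ℕ → Ω → ℝ) (hmeas : ∀ i, Measurable (X i))
    (hindep : iIndepFun X μ)
    (hident : ∀ i, IdentDistrib (X i) (X 0) μ μ)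
    (hdrift : ∫ ω, X 0 ω ∂μ < 0)
    (γ η₁ η₂ : ℝ) (hγ : 0 < γ) (hη₁ : 0 < η₁) (hη₂ : 0 < η₂)
    (hγ1 : ∫ ω, Real.exp (γ * X 0 ω) ∂μ = 1)
    (hexp : ∀ u : ℝ, -η₁ < u → u < γ + η₂ →
      Integrable (fun ω => Real.exp (u * X 0 ω)) μ)
    (r : ℝ) (hr : γ < r) (α : ℝ) (hα : 0 ≤ α) :
    ∃ c : ℝ, 0 < c ∧ ∀ a : ℝ, 0 ≤ a → ∀ L : ℝ, 1 < L →
      ∫⁻ ω, ∑' l : ℕ, (if (l : ℕ∞) < hitAbove X a L ω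
          then ENNReal.ofReal ((1 + L - walk X a l ω) ^ α * Real.exp (r * walk X a l ω))
          else 0) ∂μ
        ≤ ENNReal.ofReal (c * Real.exp (γ * (a - L)) * Real.exp (r * L)) := by
  obtain ⟨ρ, hγρ, hρ⟩ := exists_between (lt_min hr (lt_add_of_pos_right γ hη₂))
  obtain ⟨u, hρu, hu⟩ := exists_between (hρ.trans_le (min_le_right _ _))
  have hint {θ : ℝ} (h0 : 0 < θ) (hθ : θ ≤ u) : Integrable (fun ω => exp (θ * X 0 ω)) μ :=
    hexp θ (by linarith) (by linarith)
  have hIγ := hint hγ (hγρ.trans hρu).le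
  have hIρ := hint (hγ.trans hγρ) hρu.le
  have hIu := hint (hγ.trans (hγρ.trans hρu)) le_rfl
  have hX0 : ¬X 0 =ᵐ[μ] 0 := fun h => hdrift.ne (by simp [integral_congr_ae h])
  have hM : 1 < mgf (X 0) μ ρ := one_lt_mgf_of_mgf_eq_one hX0 hγ hγρ hγ1 hIγ hIρ
  obtain ⟨s, hs⟩ := exists_mul_exp_mul_lt (sub_neg.2 hρu) (2 * mgf (X 0) μ u) (sub_pos.2 hM)
  obtain ⟨K, hK, hweight⟩ := exists_rpow_mul_exp_le hα (hρ.trans_le (min_le_left _ _))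
  set B := 2 / (mgf (X 0) μ ρ - 1)
  have hB : 0 < B := div_pos two_pos (sub_pos.2 hM)
  refine ⟨K * B * (exp ((ρ - γ) * s) + exp ((ρ - u) * s)), by positivity, fun a _ L _ => ?_⟩
  rcases lt_or_ge L a with hLa | haL
  · simp [not_lt_hitAbove_of_lt hLa]
  calc _ ≤ ENNReal.ofReal (K * exp (r * L) * (B * lyapunov γ ρ u s (a - L))) :=
        lintegral_tsum_lt_hitAbove_le hmeas hindep hident (by unfold lyapunov; fun_prop)
          (by fun_prop) (fun x hx => (add_le_add (ENNReal.ofReal_le_ofReal (hweight x L hx))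
            le_rfl).trans (ofReal_add_lintegral_lyapunov_le hγρ.le hρu.le hIγ hIρ hIu hγ1 hs
              (by positivity) hx)) a
    _ ≤ _ := ENNReal.ofReal_le_ofReal <| by
        have := lyapunov_le (ρ := ρ) (s := s) (hγρ.trans hρu).le (sub_nonpos.2 haL)
        calc _ ≤ K * exp (r * L)
              * (B * ((exp ((ρ - γ) * s) + exp ((ρ - u) * s)) * exp (γ * (a - L)))) := by
              gcongr
          _ = _ := by ring
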